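/- The splitting algebra A_f of a monic polynomial f of degree n over a commutative ring A is a free A-module with basis given by the monomials τ_2^{m_2} τ_3^{m_3} ··· τ_n^{m_n} with 0 ≤ m_i < i for i = 2, 3, ..., n; in particular A_f is free of rank n! over A. -/

import Mathlib

open MvPolynomial Polynomial

/-- The ideal `(s₁ - f₁, ..., sₙ - fₙ)` defining the splitting algebra, where
`fᵢ = (-1)^i · coeff f (n - i)` are the signed coefficients of `f`. -/
noncomputable def splittingIdeal (A : Type*) [CommRing A] (f : Polynomial A) (n : ℕ) :
    Ideal (MvPolynomial (Fin n) A) :=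
  Ideal.span (Set.range fun i : Fin n =>
    esymm (Fin n) A ((i : ℕ) + 1) -
      MvPolynomial.C ((-1 : A) ^ ((i : ℕ) + 1) * f.coeff (n - ((i : ℕ) + 1))))

/-- The splitting algebra `A_f = A[t₁,...,tₙ]/(s₁ - f₁, ..., sₙ - fₙ)`. -/
noncomputable def SplittingAlgebra (A : Type*) [CommRing A] (f : Polynomial A) (n : ℕ) :=
  MvPolynomial (Fin n) A ⧸ splittingIdeal A f n

noncomputable instance (A : Type*) [CommRing A] (f : Polynomial A) (n : ℕ) :
    CommRing (SplittingAlgebra A f n) := Ideal.Quotient.commRing _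

noncomputable instance (R A : Type*) [CommSemiring R] [CommRing A] [Algebra R A]
    (f : Polynomial A) (n : ℕ) : Algebra R (SplittingAlgebra A f n) :=
  Ideal.Quotient.algebra R

/-- The universal roots `τᵢ` of `f` in the splitting algebra. -/
noncomputable def univRoot (A : Type*) [CommRing A] (f : Polynomial A) (n : ℕ) (i : Fin n) :
    SplittingAlgebra A f n :=
  Ideal.Quotient.mk (splittingIdeal A f n) (MvPolynomial.X i)

/-- The action of a permutation `σ` on the splitting algebra, sending `τᵢ` to `τ_{σ⁻¹ i}`. -/
noncomputable def permHom (A : Type*) [CommRing A] (f : Polynomial A) (n : ℕ)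
    (σ : Equiv.Perm (Fin n)) : SplittingAlgebra A f n →ₐ[A] SplittingAlgebra A f n :=
  Ideal.Quotient.liftₐ (splittingIdeal A f n)
    ((Ideal.Quotient.mkₐ A (splittingIdeal A f n)).comp
      (rename (σ.symm : Fin n → Fin n)))
    (by
      intro a ha
      have h : splittingIdeal A f n ≤ RingHom.ker
          ((Ideal.Quotient.mkₐ A (splittingIdeal A f n)).comp
            (rename (σ.symm : Fin n → Fin n))) := by
        rw [splittingIdeal, Ideal.span_le]
        rintro _ ⟨i, rfl⟩
        have : (rename (σ.symm : Fin n → Fin n))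
            (esymm (Fin n) A ((i : ℕ) + 1) -
              MvPolynomial.C ((-1 : A) ^ ((i : ℕ) + 1) * f.coeff (n - ((i : ℕ) + 1)))) =
            esymm (Fin n) A ((i : ℕ) + 1) -
              MvPolynomial.C ((-1 : A) ^ ((i : ℕ) + 1) * f.coeff (n - ((i : ℕ) + 1))) := by
          rw [map_sub, rename_esymm, rename_C]
        simp only [SetLike.mem_coe, RingHom.mem_ker, AlgHom.coe_comp, Function.comp_apply, this]
        rw [Ideal.Quotient.mkₐ_eq_mk, Ideal.Quotient.eq_zero_iff_mem]
        exact Ideal.subset_span ⟨i, rfl⟩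
      exact h ha)

/-!
Adjoining one root `r` of `f` gives `A[r] = AdjoinRoot f`, free over `A` with basis
`1, r, …, r^(n-1)`, and over `A[r]` we have `f = (X - r) g` with `g` monic of degree `n - 1`.
Comparing universal properties, splitting `f` over `A` is the same as adjoining `r` and then
splitting `g` over `A[r]`, so `A_f ≅ (A[r])_g` with `τₙ ↦ r`. By induction on `n`, and since
bases multiply in towers, the monomials `τ₂^{m₂} ⋯ τₙ^{mₙ}` with `mᵢ < i` form a
basis.
-/

open Finset

section Vieta

variable {S : Type*} [CommRing S] {N : ℕ}

lemma esymm_map_univ_eq_coeff_prod_X_sub_C (w : Fin N → S) {j : ℕ} (hj : j ≤ N) :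
    (univ.val.map w).esymm j =
      (-1) ^ j * (∏ i, (Polynomial.X - Polynomial.C (w i))).coeff (N - j) := by
  have hcard : Multiset.card (univ.val.map w) = N := by simp
  have h := Multiset.prod_X_sub_C_coeff (univ.val.map w) (k := N - j) (by omega)
  simp only [hcard, Nat.sub_sub_self hj, Multiset.map_map, Function.comp_def] at h
  rw [prod_eq_multiset_prod, h, ← mul_assoc, ← mul_pow]
  simp

lemma prod_X_sub_C_eq_of_esymm_eq (w : Fin N → S) {h : S[X]} (hm : h.Monic)
    (hd : h.natDegree = N)
    (hesymm : ∀ k : Fin N, (univ.val.map w).esymm ((k : ℕ) + 1) =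
      (-1) ^ ((k : ℕ) + 1) * h.coeff (N - ((k : ℕ) + 1))) :
    ∏ i, (Polynomial.X - Polynomial.C (w i)) = h := by
  nontriviality S
  have hPm : (∏ i, (Polynomial.X - Polynomial.C (w i))).Monic :=
    monic_prod_of_monic _ _ fun i _ => monic_X_sub_C _
  have hPd : (∏ i, (Polynomial.X - Polynomial.C (w i))).natDegree = N := by
    rw [natDegree_prod_of_monic _ _ fun i _ => monic_X_sub_C _]
    simp
  ext j
  rcases lt_trichotomy j N with hj | rfl | hj
  · have hcoeff := hesymm ⟨N - j - 1, by omega⟩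
    rw [esymm_map_univ_eq_coeff_prod_X_sub_C w (by omega)] at hcoeff
    simp only [show N - j - 1 + 1 = N - j by omega, Nat.sub_sub_self hj.le] at hcoeff
    exact (isUnit_neg_one.pow _).mul_left_cancel hcoeff
  · have hP := hPm.coeff_natDegree
    have hh := hm.coeff_natDegree
    rw [hPd] at hP
    rw [hd] at hh
    rw [hP, hh]
  · rw [coeff_eq_zero_of_natDegree_lt (by omega), coeff_eq_zero_of_natDegree_lt (by omega)]

end Vieta

lemma MvPolynomial.eval₂Hom_esymm {R S σ : Type*} [CommRing R] [CommRing S] [Fintype σ]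
    (φ : R →+* S) (w : σ → S) (j : ℕ) :
    eval₂Hom φ w (esymm σ R j) = (univ.val.map w).esymm j := by
  simp [esymm, Finset.esymm_map_val, map_sum, map_prod]

lemma Polynomial.Monic.nontrivial_adjoinRoot {A : Type*} [CommRing A] {f : A[X]} (hm : f.Monic)
    (hd : 0 < f.natDegree) : Nontrivial (AdjoinRoot f) :=
  Ideal.Quotient.nontrivial_iff.mpr <| by
    rw [Ne, Ideal.span_singleton_eq_top, hm.isUnit_iff]
    rintro rfl
    simp at hd

namespace SplittingAlgebra

variable {A : Type*} [CommRing A] {f : A[X]} {n : ℕ}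

instance {R S : Type*} [CommSemiring R] [CommSemiring S] [SMul R S] [Algebra R A] [Algebra S A]
    [IsScalarTower R S A] : IsScalarTower R S (SplittingAlgebra A f n) :=
  Ideal.Quotient.isScalarTower R S (splittingIdeal A f n)

lemma esymm_univRoot (k : Fin n) :
    (univ.val.map (univRoot A f n)).esymm ((k : ℕ) + 1) =
      algebraMap A _ ((-1) ^ ((k : ℕ) + 1) * f.coeff (n - ((k : ℕ) + 1))) := by
  have hmk : (aeval (univRoot A f n) : MvPolynomial (Fin n) A →ₐ[A] SplittingAlgebra A f n) =
      Ideal.Quotient.mkₐ A (splittingIdeal A f n) :=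
    MvPolynomial.algHom_ext fun _ => by rw [MvPolynomial.aeval_X]; rfl
  rw [← aeval_esymm_eq_multiset_esymm (Fin n) A, hmk]
  exact Ideal.Quotient.eq.mpr (Ideal.subset_span ⟨k, rfl⟩)

theorem prod_X_sub_C_univRoot (hm : f.Monic) (hd : f.natDegree = n) :
    ∏ i, (Polynomial.X - Polynomial.C (univRoot A f n i)) =
      f.map (algebraMap A (SplittingAlgebra A f n)) := by
  nontriviality SplittingAlgebra A f n
  refine prod_X_sub_C_eq_of_esymm_eq _ (hm.map _) (by rw [hm.natDegree_map, hd]) fun k => ?_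
  rw [esymm_univRoot]
  simp [Polynomial.coeff_map]

section Lift

variable {S : Type*} [CommRing S]

noncomputable def lift (φ : A →+* S) (w : Fin n → S)
    (hw : ∏ i, (Polynomial.X - Polynomial.C (w i)) = f.map φ) : SplittingAlgebra A f n →+* S :=
  Ideal.Quotient.lift _ (eval₂Hom φ w) fun p hp => by
    refine (Ideal.span_le (I := RingHom.ker (eval₂Hom φ w))).mpr ?_ hp
    rintro _ ⟨k, rfl⟩
    rw [SetLike.mem_coe, RingHom.mem_ker, map_sub, eval₂Hom_esymm,
      esymm_map_univ_eq_coeff_prod_X_sub_C w (Nat.succ_le_of_lt k.isLt), hw, eval₂Hom_C]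
    simp [Polynomial.coeff_map]

lemma ringHom_ext {F G : SplittingAlgebra A f n →+* S}
    (hC : ∀ a, F (algebraMap A _ a) = G (algebraMap A _ a))
    (hX : ∀ i, F (univRoot A f n i) = G (univRoot A f n i)) : F = G :=
  Ideal.Quotient.ringHom_ext (MvPolynomial.ringHom_ext hC hX)

variable {φ : A →+* S} {w : Fin n → S}
  (hw : ∏ i, (Polynomial.X - Polynomial.C (w i)) = f.map φ)

@[simp]
lemma lift_univRoot (i : Fin n) : lift φ w hw (univRoot A f n i) = w i :=
  eval₂Hom_X' _ _ _

@[simp]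
lemma lift_algebraMap (a : A) : lift φ w hw (algebraMap A _ a) = φ a :=
  eval₂Hom_C _ _ _

end Lift

noncomputable def equivSelfOfNatDegreeEqZero (hm : f.Monic) (hd : f.natDegree = 0) :
    SplittingAlgebra A f 0 ≃ₐ[A] A :=
  have hw : ∏ i : Fin 0, (Polynomial.X - Polynomial.C (Fin.elim0 i : A)) =
      f.map (RingHom.id A) := by
    simp [hm.natDegree_eq_zero.mp hd]
  AlgEquiv.ofRingEquiv (f := RingEquiv.ofRingHom (lift (RingHom.id A) Fin.elim0 hw)
      (algebraMap A _) (RingHom.ext fun a => lift_algebraMap hw a)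
      (ringHom_ext (fun a => by simp) (fun i => i.elim0)))
    (fun a => lift_algebraMap hw a)

variable (f) in
noncomputable def cofactor : (AdjoinRoot f)[X] :=
  f.map (AdjoinRoot.of f) /ₘ (Polynomial.X - Polynomial.C (AdjoinRoot.root f))

variable (f) in
lemma X_sub_C_root_mul_cofactor :
    (Polynomial.X - Polynomial.C (AdjoinRoot.root f)) * cofactor f = f.map (AdjoinRoot.of f) :=
  mul_divByMonic_eq_iff_isRoot.mpr (by rw [IsRoot, Polynomial.eval_map, AdjoinRoot.eval₂_root])

lemma monic_cofactor (hm : f.Monic) : (cofactor f).Monic :=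
  (monic_X_sub_C _).of_mul_monic_left (by rw [X_sub_C_root_mul_cofactor]; exact hm.map _)

lemma natDegree_cofactor (hm : f.Monic) (hd : f.natDegree = n + 1) :
    (cofactor f).natDegree = n := by
  have := hm.nontrivial_adjoinRoot (by omega)
  rw [cofactor, natDegree_divByMonic _ (monic_X_sub_C _), hm.natDegree_map, hd, natDegree_X_sub_C]
  rfl

lemma eval₂_univRoot_last (hm : f.Monic) (hd : f.natDegree = n + 1) :
    f.eval₂ (algebraMap A _) (univRoot A f (n + 1) (Fin.last n)) = 0 := by
  rw [← Polynomial.eval_map, ← prod_X_sub_C_univRoot hm hd, Polynomial.eval_prod]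
  exact prod_eq_zero (mem_univ (Fin.last n)) (by simp)

noncomputable def rootHom (hm : f.Monic) (hd : f.natDegree = n + 1) :
    AdjoinRoot f →+* SplittingAlgebra A f (n + 1) :=
  AdjoinRoot.lift _ _ (eval₂_univRoot_last hm hd)

variable (f n) in
noncomputable def cofactorRoots : Fin (n + 1) → SplittingAlgebra (AdjoinRoot f) (cofactor f) n :=
  Fin.snoc (univRoot _ _ n) (algebraMap _ _ (AdjoinRoot.root f))

lemma prod_X_sub_C_cofactorRoots (hm : f.Monic) (hd : f.natDegree = n + 1) :
    ∏ i, (Polynomial.X - Polynomial.C (cofactorRoots f n i)) = f.map (algebraMap A _) := by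
  simp only [cofactorRoots, Fin.prod_univ_castSucc, Fin.snoc_castSucc, Fin.snoc_last]
  rw [prod_X_sub_C_univRoot (monic_cofactor hm) (natDegree_cofactor hm hd),
    IsScalarTower.algebraMap_eq A (AdjoinRoot f), ← Polynomial.map_map, AdjoinRoot.algebraMap_eq,
    ← X_sub_C_root_mul_cofactor, Polynomial.map_mul, mul_comm]
  simp

lemma prod_X_sub_C_univRoot_castSucc (hm : f.Monic) (hd : f.natDegree = n + 1) :
    ∏ i : Fin n, (Polynomial.X - Polynomial.C (univRoot A f (n + 1) i.castSucc)) =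
      (cofactor f).map (rootHom hm hd) := by
  refine (monic_X_sub_C (univRoot A f (n + 1) (Fin.last n))).isRegular.left ?_
  dsimp only
  rw [mul_comm,
    ← Fin.prod_univ_castSucc (fun i => Polynomial.X - Polynomial.C (univRoot A f _ i)),
    prod_X_sub_C_univRoot hm hd, ← AdjoinRoot.lift_comp_of (eval₂_univRoot_last hm hd),
    ← Polynomial.map_map, ← X_sub_C_root_mul_cofactor, Polynomial.map_mul]
  simp [rootHom]

noncomputable def toCofactor (hm : f.Monic) (hd : f.natDegree = n + 1) :
    SplittingAlgebra A f (n + 1) →+* SplittingAlgebra (AdjoinRoot f) (cofactor f) n :=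
  lift (algebraMap A _) (cofactorRoots f n) (prod_X_sub_C_cofactorRoots hm hd)

noncomputable def ofCofactor (hm : f.Monic) (hd : f.natDegree = n + 1) :
    SplittingAlgebra (AdjoinRoot f) (cofactor f) n →+* SplittingAlgebra A f (n + 1) :=
  lift (rootHom hm hd) (fun i => univRoot A f (n + 1) i.castSucc)
    (prod_X_sub_C_univRoot_castSucc hm hd)

lemma ofCofactor_comp_toCofactor (hm : f.Monic) (hd : f.natDegree = n + 1) :
    (ofCofactor hm hd).comp (toCofactor hm hd) = RingHom.id _ := by
  refine ringHom_ext (fun a => ?_) (Fin.lastCases ?_ fun i => ?_)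
  · simp [toCofactor, ofCofactor, IsScalarTower.algebraMap_apply A (AdjoinRoot f), rootHom]
  · simp [toCofactor, ofCofactor, cofactorRoots, rootHom]
  · simp [toCofactor, ofCofactor, cofactorRoots]

lemma toCofactor_comp_ofCofactor (hm : f.Monic) (hd : f.natDegree = n + 1) :
    (toCofactor hm hd).comp (ofCofactor hm hd) = RingHom.id _ := by
  have hroot : (toCofactor hm hd).comp (rootHom hm hd) = algebraMap _ _ := by
    refine AdjoinRoot.ringHom_ext (RingHom.ext fun a => ?_) ?_
    · simp [toCofactor, rootHom, IsScalarTower.algebraMap_apply A (AdjoinRoot f)]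
    · simp [toCofactor, rootHom, cofactorRoots]
  refine ringHom_ext (fun b => ?_) fun i => ?_
  · simpa [ofCofactor] using RingHom.congr_fun hroot b
  · simp [toCofactor, ofCofactor, cofactorRoots]

noncomputable def equivCofactor (hm : f.Monic) (hd : f.natDegree = n + 1) :
    SplittingAlgebra A f (n + 1) ≃ₐ[A] SplittingAlgebra (AdjoinRoot f) (cofactor f) n :=
  AlgEquiv.ofRingEquiv (f := RingEquiv.ofRingHom (toCofactor hm hd) (ofCofactor hm hd)
      (toCofactor_comp_ofCofactor hm hd) (ofCofactor_comp_toCofactor hm hd))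
    (lift_algebraMap (prod_X_sub_C_cofactorRoots hm hd))

@[simp]
lemma equivCofactor_univRoot (hm : f.Monic) (hd : f.natDegree = n + 1) (i : Fin (n + 1)) :
    equivCofactor hm hd (univRoot A f (n + 1) i) = cofactorRoots f n i :=
  lift_univRoot (prod_X_sub_C_cofactorRoots hm hd) i

lemma equivCofactor_prod_univRoot_pow (hm : f.Monic) (hd : f.natDegree = n + 1)
    (e : Fin (n + 1) → ℕ) :
    equivCofactor hm hd (∏ i, univRoot A f (n + 1) i ^ e i) =
      AdjoinRoot.root f ^ e (Fin.last n) •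
        ∏ i : Fin n, univRoot (AdjoinRoot f) (cofactor f) n i ^ e i.castSucc := by
  simp [Fin.prod_univ_castSucc, cofactorRoots, Algebra.smul_def, mul_comm]

theorem exists_basis_prod_univRoot_pow (hm : f.Monic) (hd : f.natDegree = n) :
    ∃ b : Module.Basis ((i : Fin n) → Fin ((i : ℕ) + 1)) A (SplittingAlgebra A f n),
      ∀ m, b m = ∏ i, univRoot A f n i ^ (m i : ℕ) := by
  induction n generalizing A with
  | zero =>
    refine ⟨(Module.Basis.singleton _ A).map
      (equivSelfOfNatDegreeEqZero hm hd).symm.toLinearEquiv, fun m => ?_⟩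
    simp
  | succ n ih =>
    obtain ⟨b, hb⟩ := ih (monic_cofactor hm) (natDegree_cofactor hm hd)
    let bRoot : Module.Basis (Fin (n + 1)) A (AdjoinRoot f) :=
      (AdjoinRoot.powerBasis' hm).basis.reindex (finCongr hd)
    refine ⟨((bRoot.smulTower b).map (equivCofactor hm hd).symm.toLinearEquiv).reindex
      (Fin.snocEquiv fun i : Fin (n + 1) => Fin ((i : ℕ) + 1)), fun m => ?_⟩
    rw [Module.Basis.reindex_apply, Module.Basis.map_apply, AlgEquiv.toLinearEquiv_apply,
      AlgEquiv.symm_apply_eq, equivCofactor_prod_univRoot_pow, Module.Basis.smulTower_apply, hb]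
    simp only [bRoot, Module.Basis.reindex_apply, PowerBasis.coe_basis, AdjoinRoot.powerBasis'_gen]
    rfl

end SplittingAlgebra

/-- Here `univRoot A f n i` is `τ_{i+1}`, whose exponent ranges over `Fin (i+1)`. -/
theorem splittingAlgebra_free {A : Type*} [CommRing A]
    (f : Polynomial A) (n : ℕ) (hmonic : f.Monic) (hdeg : f.natDegree = n) :
    (∃ b : Module.Basis ((i : Fin n) → Fin ((i : ℕ) + 1)) A (SplittingAlgebra A f n),
      ∀ m : (i : Fin n) → Fin ((i : ℕ) + 1),
        b m = ∏ i : Fin n, univRoot A f n i ^ ((m i : ℕ))) ∧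
    Module.finrank A (SplittingAlgebra A f n) = n.factorial := by
  obtain ⟨b, hb⟩ := SplittingAlgebra.exists_basis_prod_univRoot_pow hmonic hdeg
  refine ⟨⟨b, hb⟩, ?_⟩
  rcases subsingleton_or_nontrivial A with hA | hA
  · obtain rfl : n = 0 := by rw [← hdeg, Subsingleton.elim f 0, natDegree_zero]
    simp [Module.finrank, rank_subsingleton]
  · rw [Module.finrank_eq_card_basis b, Fintype.card_pi]
    simp [Fin.prod_univ_eq_prod_range (· + 1), prod_range_add_one_eq_factorial]
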